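/- If S(A,b) ≠ ∅, then there exists a minimal solution x of the system that is an optimal solution of the minimax problem: minimize Z(x) = max_j x_j over x ∈ S(A,b). -/

import Mathlib

open Finset

noncomputable section

/-- Łukasiewicz t-norm. -/
def TL (a x : ℝ) : ℝ := max (a + x - 1) 0

/-- Solution set of the addition-Łukasiewicz system. -/
def Sset {m n : ℕ} (A : Fin m → Fin n → ℝ) (b : Fin m → ℝ) : Set (Fin n → ℝ) :=
  {x | (∀ j, x j ∈ Set.Icc (0:ℝ) 1) ∧ ∀ i, b i ≤ ∑ j, TL (A i j) (x j)}

/-- Minimal solution. -/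
def IsMinimalSol {m n : ℕ} (A : Fin m → Fin n → ℝ) (b : Fin m → ℝ) (x : Fin n → ℝ) : Prop :=
  x ∈ Sset A b ∧ ∀ y ∈ Sset A b, y ≤ x → y = x

/-- The set F_j(z). -/
def Fset {m n : ℕ} (A : Fin m → Fin n → ℝ) (b : Fin m → ℝ) (j : Fin n) (z : Fin n → ℝ) :
    Set ℝ :=
  {t | t ∈ Set.Icc (0:ℝ) 1 ∧
    ∀ i, b i ≤ TL (A i j) t + ∑ k ∈ Finset.univ.erase j, TL (A i k) (z k)}

/-- Objective Z(x) = max_j x_j. -/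
def Zf {n : ℕ} (x : Fin n → ℝ) : ℝ := ⨆ j, x j

/-- Optimal solution of the minimax problem. -/
def IsOptimal {m n : ℕ} (A : Fin m → Fin n → ℝ) (b : Fin m → ℝ) (x : Fin n → ℝ) : Prop :=
  x ∈ Sset A b ∧ ∀ y ∈ Sset A b, Zf x ≤ Zf y

/-! Minimise `Z` over the compact solution set, then minimise the coordinate sum over the
solutions below that minimiser: the result is a minimal solution, and it is still optimal
because `Z` is monotone. -/

lemma IsCompact.exists_minimal_le {ι : Type*} [Fintype ι] {s : Set (ι → ℝ)} (hs : IsCompact s)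
    {x : ι → ℝ} (hx : x ∈ s) : ∃ y ≤ x, Minimal (· ∈ s) y := by
  obtain ⟨y, ⟨hys, hyx⟩, hy⟩ := (hs.inter_right isClosed_Iic).exists_isMinOn
    ⟨x, hx, le_rfl (a := x)⟩ (continuous_finsetSum univ fun i _ => continuous_apply i).continuousOn
  refine ⟨y, hyx, hys, fun z hzs hzy => ?_⟩
  by_contra hyz
  obtain ⟨i, hi⟩ : ∃ i, z i < y i := by simpa [Pi.le_def] using hyz
  have hsum : ∑ i, z i < ∑ i, y i := sum_lt_sum (fun i _ => hzy i) ⟨i, mem_univ i, hi⟩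
  exact (hy ⟨hzs, hzy.trans hyx⟩).not_gt hsum

lemma continuous_TL (a : ℝ) : Continuous (TL a) := by
  unfold TL
  fun_prop

lemma isCompact_Sset {m n : ℕ} (A : Fin m → Fin n → ℝ) (b : Fin m → ℝ) :
    IsCompact (Sset A b) := by
  have hclosed : IsClosed (Sset A b) := by
    simp only [Sset, Set.ofPred_and, Set.ofPred_forall]
    refine (isClosed_iInter fun j => ?_).inter (isClosed_iInter fun i => ?_)
    · exact isClosed_Icc.preimage (continuous_apply j)
    · exact isClosed_le continuous_const
        (continuous_finsetSum univ fun j _ => (continuous_TL _).comp (continuous_apply j))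
  exact isCompact_Icc.of_isClosed_subset hclosed fun x hx =>
    ⟨fun j => (hx.1 j).1, fun j => (hx.1 j).2⟩

lemma monotone_Zf {n : ℕ} : Monotone (Zf (n := n)) :=
  fun _ _ h => Finite.ciSup_mono h

lemma continuous_Zf {n : ℕ} : Continuous (Zf (n := n)) := by
  rcases isEmpty_or_nonempty (Fin n) with _ | _
  · have : Zf (n := n) = fun _ => 0 := funext fun x => Real.iSup_of_isEmpty x
    exact this ▸ continuous_const
  · have : Zf (n := n) = fun x => univ.sup' univ_nonempty x := by
      ext x
      rw [sup'_univ_eq_ciSup]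
      rfl
    rw [this]
    exact Continuous.finset_sup'_apply univ_nonempty fun j _ => continuous_apply j

theorem stmt16_general {m n : ℕ} (A : Fin m → Fin n → ℝ) (b : Fin m → ℝ)
    (hS : (Sset A b).Nonempty) :
    ∃ x, IsMinimalSol A b x ∧ IsOptimal A b x := by
  obtain ⟨x₀, hx₀, hZx₀⟩ := (isCompact_Sset A b).exists_isMinOn hS continuous_Zf.continuousOn
  obtain ⟨x, hxx₀, hxS, hxmin⟩ := (isCompact_Sset A b).exists_minimal_le hx₀
  exact ⟨x, ⟨hxS, fun y hy hyx => le_antisymm hyx (hxmin hy hyx)⟩,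
    hxS, fun y hy => (monotone_Zf hxx₀).trans (hZx₀ hy)⟩

theorem stmt16 {m n : ℕ} (hn : 0 < n) (A : Fin m → Fin n → ℝ) (b : Fin m → ℝ)
    (hA : ∀ i j, A i j ∈ Set.Icc (0:ℝ) 1) (hb : ∀ i, 0 < b i)
    (hS : (Sset A b).Nonempty) :
    ∃ x, IsMinimalSol A b x ∧ IsOptimal A b x :=
  stmt16_general A b hS
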